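/- Let q be an odd prime power, A the Bose–Chowla Sidon set in Z/(q^2−1)Z, and G the associated sum graph. If i and j are distinct absolute points (2i, 2j ∈ A), then i and j have a common neighbor if and only if i ≠ j + (q^2−1)/2. -/

import Mathlib

open scoped Pointwise

/-!
Write `A` for the Bose–Chowla set, so `a ∈ A` iff `θ ^ a` lies on the affine line `θ + F`. As
`θ ∉ F`, for `g ≠ 1` at most one point `y` of this line has `g * y` on it too, and none if
`g ∈ F`; as `{1, θ}` is an `F`-basis of `K`, some `y` does if `g ∉ F`. Hence `A` is a Sidon set,
and a nonzero `d` lies in `A - A` iff `θ ^ d ∉ F`.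

In the sum graph of a Sidon set, distinct absolute points `i, j` are not adjacent, since
`(2i, i + j)` and `(i + j, 2j)` would be two pairs with difference `i - j`; so every `k` with
`i + k, j + k ∈ A` is a common neighbour, and one exists iff `i - j ∈ A - A`. For absolute points,
`θ ^ (i - j) ∈ F` iff `θ ^ (2(i - j)) = 1`, so `i - j ∈ A - A` iff `2(i - j) ≠ 0`, i.e. iff `i - j`
is not the element `(q² - 1)/2` of order two.
-/

section PowZModVal

variable {M : Type*} [Monoid M] {x : M} {N : ℕ}

theorem pow_zmod_val_add [NeZero N] (hx : orderOf x = N) (a b : ZMod N) :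
    x ^ (a + b).val = x ^ a.val * x ^ b.val := by
  rw [ZMod.val_add, ← pow_add, ← pow_mod_orderOf x (a.val + b.val), hx]

theorem pow_zmod_val_injective [NeZero N] (hx : orderOf x = N) :
    Function.Injective fun a : ZMod N => x ^ a.val := fun a b h =>
  ZMod.val_injective N <| pow_injOn_Iio_orderOf (hx ▸ a.val_lt) (hx ▸ b.val_lt) h

theorem pow_zmod_val_eq_one_iff [NeZero N] (hx : orderOf x = N) {a : ZMod N} :
    x ^ a.val = 1 ↔ a = 0 := by
  rw [← pow_zero x, ← ZMod.val_zero (n := N), (pow_zmod_val_injective hx).eq_iff]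

theorem exists_pow_zmod_val_eq {G : Type*} [Group G] [Finite G] {θ : G}
    (hθ : ∀ x : G, x ∈ Subgroup.zpowers θ) (hN : orderOf θ = N) (x : G) :
    ∃ a : ZMod N, θ ^ a.val = x := by
  obtain ⟨n, rfl⟩ := (Submonoid.mem_powers_iff x θ).1 (mem_powers_iff_mem_zpowers.2 (hθ x))
  refine ⟨n, ?_⟩
  rw [ZMod.val_natCast, ← hN, pow_mod_orderOf]

end PowZModVal

theorem ZMod.two_mul_eq_zero_iff_eq_half {N : ℕ} [NeZero N] (hN : Even N) {d : ZMod N}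
    (hd : d ≠ 0) : 2 * d = 0 ↔ d = ((N / 2 : ℕ) : ZMod N) := by
  have hhalf : 2 * (N / 2) = N := Nat.two_mul_div_two_of_even hN
  constructor
  · intro h
    rw [← ZMod.natCast_zmod_val d, ← Nat.cast_ofNat, ← Nat.cast_mul,
      ZMod.natCast_eq_zero_iff] at h
    obtain ⟨c, hc⟩ := h
    have hlt := d.val_lt
    have hpos : d.val ≠ 0 := (ZMod.val_ne_zero d).2 hd
    have hc1 : c = 1 := by
      rcases c with _ | _ | c
      · omega
      · rfl
      · nlinarith
    subst hc1
    rw [← ZMod.natCast_zmod_val d]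
    congr 1
    omega
  · rintro rfl
    rw [← Nat.cast_ofNat, ← Nat.cast_mul, hhalf, ZMod.natCast_self]

def IsSidonSet {R : Type*} [AddCommGroup R] (A : Set R) : Prop :=
  ∀ a ∈ A, ∀ b ∈ A, ∀ a' ∈ A, ∀ b' ∈ A, a - b = a' - b' → a ≠ b → a = a'

section SumGraph

variable {R : Type*} [CommRing R] {A : Set R} {i j : R}

theorem IsSidonSet.add_notMem_of_two_mul_mem (hA : IsSidonSet A) (hij : i ≠ j)
    (hi : 2 * i ∈ A) (hj : 2 * j ∈ A) : i + j ∉ A := fun hij' =>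
  hij <| by
    have := hA _ hi _ hij' _ hij' _ hj (by ring) (by contrapose! hij; linear_combination hij)
    linear_combination this

theorem IsSidonSet.exists_common_adj_iff (hA : IsSidonSet A) {G : SimpleGraph R}
    (hG : ∀ i j, G.Adj i j ↔ i ≠ j ∧ i + j ∈ A) (hij : i ≠ j) (hi : 2 * i ∈ A)
    (hj : 2 * j ∈ A) : (∃ k, G.Adj i k ∧ G.Adj j k) ↔ i - j ∈ A - A := by
  have hnot := hA.add_notMem_of_two_mul_mem hij hi hj
  simp only [hG, Set.mem_sub]
  constructor
  · rintro ⟨k, ⟨-, hik⟩, -, hjk⟩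
    exact ⟨i + k, hik, j + k, hjk, by ring⟩
  · rintro ⟨a, ha, b, hb, hab⟩
    have hjb : j + (a - i) = b := by linear_combination hab
    refine ⟨a - i, ⟨?_, by rwa [add_sub_cancel]⟩, ?_, by rwa [hjb]⟩
    · intro h
      exact hnot (by rw [add_comm, h, hjb]; exact hb)
    · intro h
      exact hnot (by rw [h, add_sub_cancel]; exact ha)

end SumGraph

section AffineLine

variable {K : Type*} [Field K] {F : Subfield K} {θ : K}

theorem mem_of_mul_mem_of_ne_zero {c y : K} (hc : c ∈ F) (hc0 : c ≠ 0) (h : c * y ∈ F) : y ∈ F := by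
  simpa [hc0] using F.mul_mem (F.inv_mem hc) h

theorem eq_one_of_mem_of_mul_sub_mem (hθ : θ ∉ F) {g y : K} (hg : g ∈ F) (hy : y - θ ∈ F)
    (hgy : g * y - θ ∈ F) : g = 1 := by
  by_contra hg1
  have hyF : y ∈ F := by
    refine mem_of_mul_mem_of_ne_zero (F.sub_mem hg F.one_mem) (sub_ne_zero.2 hg1) ?_
    simpa [sub_mul] using F.sub_mem hgy hy
  exact hθ (by simpa using F.sub_mem hyF hy)

theorem eq_of_mul_sub_mem (hθ : θ ∉ F) {g y y' : K} (hg : g ≠ 1) (hy : y - θ ∈ F)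
    (hy' : y' - θ ∈ F) (hgy : g * y - θ ∈ F) (hgy' : g * y' - θ ∈ F) : y = y' := by
  by_contra hne
  refine hg (eq_one_of_mem_of_mul_sub_mem hθ ?_ hy hgy)
  have hdiff : y - y' ∈ F := by simpa using F.sub_mem hy hy'
  have : (y - y') * g ∈ F := by simpa [mul_sub, mul_comm] using F.sub_mem hgy hgy'
  exact mem_of_mul_mem_of_ne_zero hdiff (sub_ne_zero.2 hne) this

theorem exists_sub_mem_and_mul_sub_mem (hspan : ∀ z : K, ∃ u ∈ F, ∃ v ∈ F, z = u + v * θ)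
    {g : K} (hg : g ∉ F) : ∃ y, y - θ ∈ F ∧ g * y - θ ∈ F := by
  obtain ⟨u, hu, v, hv, rfl⟩ := hspan g
  obtain ⟨w, hw, s, hs, hθ2⟩ := hspan (θ * θ)
  have hv0 : v ≠ 0 := by rintro rfl; simp_all
  -- `c` makes the `θ`-coordinate of `g * (θ + c)` equal to `1`
  set c := (1 - u - v * s) / v
  have hcF : c ∈ F := F.div_mem (F.sub_mem (F.sub_mem F.one_mem hu) (F.mul_mem hv hs)) hv
  have hc : v * c = 1 - u - v * s := mul_div_cancel₀ _ hv0
  have key : (u + v * θ) * (θ + c) - θ = u * c + v * w := by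
    linear_combination θ * hc + v * hθ2
  refine ⟨θ + c, by simpa using hcF, ?_⟩
  rw [key]
  exact F.add_mem (F.mul_mem hu hcF) (F.mul_mem hv hw)

theorem exists_eq_add_mul_of_card_eq_sq [Finite K] (hθ : θ ∉ F)
    (hcard : Nat.card K = Nat.card F ^ 2) (z : K) : ∃ u ∈ F, ∃ v ∈ F, z = u + v * θ := by
  let f : F × F → K := fun p => p.1 + p.2 * θ
  have hinj : Function.Injective f := by
    rintro ⟨u, v⟩ ⟨u', v'⟩ h
    have hv : (v : K) = v' := by
      by_contra hne
      refine hθ (mem_of_mul_mem_of_ne_zero (F.sub_mem v.2 v'.2) (sub_ne_zero.2 hne) ?_)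
      have h' : (v - v' : K) * θ = u' - u := by simp only [f] at h; linear_combination h
      exact h' ▸ F.sub_mem u'.2 u.2
    have hu : (u : K) = u' := by simp only [f, hv] at h; exact add_right_cancel h
    simp [Subtype.ext hu, Subtype.ext hv]
  have hbij := (Nat.bijective_iff_injective_and_card f).2 ⟨hinj, by rw [Nat.card_prod, hcard, sq]⟩
  obtain ⟨⟨u, v⟩, rfl⟩ := hbij.2 z
  exact ⟨u, u.2, v, v.2, rfl⟩

theorem Units.val_notMem_of_forall_mem_zpowers [Finite K] {θ : Kˣ}
    (hθ : ∀ x : Kˣ, x ∈ Subgroup.zpowers θ) (hF : Nat.card F < Nat.card K) : (θ : K) ∉ F := by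
  intro hθF
  have hall : ∀ y : K, y ∈ F := fun y => by
    rcases eq_or_ne y 0 with rfl | hy
    · exact F.zero_mem
    · obtain ⟨k, hk⟩ := hθ (Units.mk0 y hy)
      have hy' : (θ : K) ^ k = y := by simpa using congrArg Units.val hk
      exact hy' ▸ F.zpow_mem hθF k
  exact hF.ne (Nat.card_congr (Equiv.subtypeUnivEquiv hall))

end AffineLine

section BoseChowla

variable {K : Type*} [Field K] {F : Subfield K} {θ : K} {N : ℕ}

def boseChowlaSet (F : Subfield K) (θ : K) (N : ℕ) : Set (ZMod N) :=
  {a | θ ^ a.val - θ ∈ F}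

theorem pow_zmod_val_eq_mul_of_sub_eq [NeZero N] (hord : orderOf θ = N) {a b d : ZMod N}
    (h : a - b = d) : θ ^ a.val = θ ^ d.val * θ ^ b.val := by
  rw [← pow_zmod_val_add hord, ← h, sub_add_cancel]

theorem isSidonSet_boseChowlaSet [NeZero N] (hord : orderOf θ = N) (hθ : θ ∉ F) :
    IsSidonSet (boseChowlaSet F θ N) := by
  intro a ha b hb a' ha' b' hb' hab hne
  have hg : θ ^ (a - b).val ≠ 1 := (pow_zmod_val_eq_one_iff hord).not.2 (sub_ne_zero.2 hne)
  have hbb : θ ^ b.val = θ ^ b'.val := by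
    refine eq_of_mul_sub_mem hθ hg hb hb' ?_ ?_
    · rwa [← pow_zmod_val_eq_mul_of_sub_eq hord rfl]
    · rwa [← pow_zmod_val_eq_mul_of_sub_eq hord hab.symm]
  linear_combination hab + pow_zmod_val_injective hord hbb

theorem mem_sub_boseChowlaSet_iff [NeZero N] (hord : orderOf θ = N) (hθ : θ ∉ F)
    (hgen : ∀ y : K, y ≠ 0 → ∃ a : ZMod N, θ ^ a.val = y)
    (hspan : ∀ z : K, ∃ u ∈ F, ∃ v ∈ F, z = u + v * θ) {d : ZMod N} (hd : d ≠ 0) :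
    d ∈ boseChowlaSet F θ N - boseChowlaSet F θ N ↔ θ ^ d.val ∉ F := by
  constructor
  · rintro ⟨a, ha, b, hb, rfl⟩ hF
    refine hd ((pow_zmod_val_eq_one_iff hord).1 (eq_one_of_mem_of_mul_sub_mem hθ hF hb ?_))
    rwa [← pow_zmod_val_eq_mul_of_sub_eq hord rfl]
  · intro hF
    obtain ⟨y, hy, hgy⟩ := exists_sub_mem_and_mul_sub_mem hspan hF
    have hy0 : y ≠ 0 := by rintro rfl; exact hθ (by simpa using hy)
    obtain ⟨b, rfl⟩ := hgen y hy0
    refine ⟨d + b, ?_, b, hy, add_sub_cancel_right d b⟩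
    rwa [boseChowlaSet, Set.mem_ofPred_eq, pow_zmod_val_add hord]

theorem pow_zmod_val_sub_mem_iff [NeZero N] (hord : orderOf θ = N) (hθ : θ ∉ F) {i j : ZMod N}
    (hi : 2 * i ∈ boseChowlaSet F θ N) (hj : 2 * j ∈ boseChowlaSet F θ N) :
    θ ^ (i - j).val ∈ F ↔ 2 * (i - j) = 0 := by
  have e : θ ^ (2 * i).val = θ ^ (i - j + (i - j)).val * θ ^ (2 * j).val :=
    pow_zmod_val_eq_mul_of_sub_eq hord (by ring)
  rw [two_mul, ← pow_zmod_val_eq_one_iff hord]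
  rw [pow_zmod_val_add hord] at e ⊢
  constructor
  · intro hF
    refine eq_one_of_mem_of_mul_sub_mem hθ (F.mul_mem hF hF) hj ?_
    rw [← e]
    exact hi
  · intro h
    rcases mul_self_eq_one_iff.1 h with h1 | h1 <;> rw [h1]
    exacts [F.one_mem, F.neg_mem F.one_mem]

end BoseChowla

theorem stmt_9_general (q : ℕ) (hodd : Odd q)
    {K : Type*} [Field K] (hK : Nat.card K = q ^ 2)
    (F : Subfield K) (hF : Nat.card F = q)
    (θ : Kˣ) (hθ : ∀ x : Kˣ, x ∈ Subgroup.zpowers θ)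
    (A : Set (ZMod (q ^ 2 - 1)))
    (hA : A = {a : ZMod (q ^ 2 - 1) | ((θ : K) ^ a.val - (θ : K)) ∈ F})
    (G : SimpleGraph (ZMod (q ^ 2 - 1)))
    (hG : ∀ i j, G.Adj i j ↔ i ≠ j ∧ i + j ∈ A)
    (i j : ZMod (q ^ 2 - 1)) (hij : i ≠ j)
    (hi : 2 * i ∈ A) (hj : 2 * j ∈ A) :
    (∃ k, G.Adj i k ∧ G.Adj j k) ↔
      i ≠ j + (((q ^ 2 - 1) / 2 : ℕ) : ZMod (q ^ 2 - 1)) := by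
  change A = boseChowlaSet F (θ : K) (q ^ 2 - 1) at hA
  subst hA
  have : Finite K := Nat.finite_of_card_ne_zero (by simp [hK, hodd.pos.ne'])
  have hq : 1 < q := hF ▸ Finite.one_lt_card
  have : NeZero (q ^ 2 - 1) := ⟨Nat.sub_ne_zero_of_lt (by nlinarith)⟩
  have hordU : orderOf θ = q ^ 2 - 1 := by
    rw [orderOf_eq_card_of_forall_mem_zpowers hθ, Nat.card_units, hK]
  have hord : orderOf (θ : K) = q ^ 2 - 1 := orderOf_units.trans hordU
  have hgen : ∀ y : K, y ≠ 0 → ∃ a : ZMod (q ^ 2 - 1), (θ : K) ^ a.val = y := fun y hy =>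
    (exists_pow_zmod_val_eq hθ hordU (Units.mk0 y hy)).imp fun _ ha => by
      simpa using congrArg Units.val ha
  have hθF : (θ : K) ∉ F := Units.val_notMem_of_forall_mem_zpowers hθ (by rw [hF, hK]; nlinarith)
  have hspan := exists_eq_add_mul_of_card_eq_sq hθF (by rw [hK, hF])
  have hN : Even (q ^ 2 - 1) := Nat.Odd.sub_odd hodd.pow odd_one
  rw [(isSidonSet_boseChowlaSet hord hθF).exists_common_adj_iff hG hij hi hj,
    mem_sub_boseChowlaSet_iff hord hθF hgen hspan (sub_ne_zero.2 hij),
    pow_zmod_val_sub_mem_iff hord hθF hi hj,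
    ZMod.two_mul_eq_zero_iff_eq_half hN (sub_ne_zero.2 hij), sub_eq_iff_eq_add', ne_eq]

/-- Two distinct absolute points of the Bose–Chowla sum graph have a common
neighbor iff they are not antipodal. -/
theorem stmt_9 (q : ℕ) (hq : ∃ p n : ℕ, p.Prime ∧ 0 < n ∧ q = p ^ n) (hodd : Odd q)
    {K : Type*} [Field K] (hK : Nat.card K = q ^ 2)
    (F : Subfield K) (hF : Nat.card F = q)
    (θ : Kˣ) (hθ : ∀ x : Kˣ, x ∈ Subgroup.zpowers θ)
    (A : Set (ZMod (q ^ 2 - 1)))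
    (hA : A = {a : ZMod (q ^ 2 - 1) | ((θ : K) ^ a.val - (θ : K)) ∈ F})
    (G : SimpleGraph (ZMod (q ^ 2 - 1)))
    (hG : ∀ i j, G.Adj i j ↔ i ≠ j ∧ i + j ∈ A)
    (i j : ZMod (q ^ 2 - 1)) (hij : i ≠ j)
    (hi : 2 * i ∈ A) (hj : 2 * j ∈ A) :
    (∃ k, G.Adj i k ∧ G.Adj j k) ↔
      i ≠ j + (((q ^ 2 - 1) / 2 : ℕ) : ZMod (q ^ 2 - 1)) :=
  stmt_9_general q hodd hK F hF θ hθ A hA G hG i j hij hi hj
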